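/- arXiv:2604.11941 — 2 statements merged into one kernel-verified Lean document; each statement's English description precedes it below -/
import Mathlib

section
/- Let m ≥ 2 be an integer and let a, b, c, d ∈ ℂ be roots of unity (i.e., each satisfies ζ^{n} = 1 for some positive integer n). Then 1 − (a+b)(c+d)/m − a·b·c·d/m² ≠ 0. -/
/-!
Put `s = (a + b)(c + d)` and `t = abcd`. If the expression vanished, then `t = m (m - s)`, so
`1 / m = (m - s) t⁻¹`. Roots of unity and their inverses are algebraic integers, hence so is
`1 / m`; but a rational algebraic integer lies in `ℤ`, which `1 / m` does not for `m ≥ 2`.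
-/

theorem isIntegral_of_pow_eq_one {R A : Type*} [CommRing R] [Ring A] [Algebra R A] {x : A}
    {n : ℕ} (hn : 0 < n) (hx : x ^ n = 1) : IsIntegral R x :=
  IsIntegral.of_pow hn (hx ▸ isIntegral_one)

theorem not_isIntegral_natCast_inv {K : Type*} [Field K] [CharZero K] {m : ℕ} (hm : 2 ≤ m) :
    ¬IsIntegral ℤ (m : K)⁻¹ := by
  intro h
  obtain ⟨k, hk⟩ := (IsIntegral.exists_int_iff_exists_rat h).mp ⟨(m : ℚ)⁻¹, by push_cast; rfl⟩
  have hkm : k * m = 1 := by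
    have : (k : K) * m = 1 := by
      rw [← hk]; exact inv_mul_cancel₀ (by exact_mod_cast (by omega : m ≠ 0))
    exact_mod_cast this
  have := Int.eq_one_of_mul_eq_one_left (by omega) hkm
  omega

theorem inv_eq_of_one_sub_div_sub_div_sq_eq_zero {K : Type*} [Field K] {m a b c d : K}
    (hm : m ≠ 0) (ha : a ≠ 0) (hb : b ≠ 0) (hc : c ≠ 0) (hd : d ≠ 0)
    (h : 1 - (a + b) * (c + d) / m - a * b * c * d / m ^ 2 = 0) :
    m⁻¹ = (m - (a + b) * (c + d)) * (a⁻¹ * b⁻¹ * c⁻¹ * d⁻¹) := by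
  field_simp at h ⊢
  linear_combination -h

/-- **Nonvanishing of `1 − (a+b)(c+d)/m − abcd/m²` for roots of unity `a,b,c,d`.** -/
theorem roots_of_unity_nonvanishing
    (m : ℕ) (hm : 2 ≤ m) (a b c d : ℂ)
    (ha : ∃ n : ℕ, 0 < n ∧ a ^ n = 1) (hb : ∃ n : ℕ, 0 < n ∧ b ^ n = 1)
    (hc : ∃ n : ℕ, 0 < n ∧ c ^ n = 1) (hd : ∃ n : ℕ, 0 < n ∧ d ^ n = 1) :
    1 - (a + b) * (c + d) / m - a * b * c * d / (m : ℂ) ^ 2 ≠ 0 := by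
  intro h
  have hne : ∀ {x : ℂ}, (∃ n : ℕ, 0 < n ∧ x ^ n = 1) → x ≠ 0 := fun ⟨n, hn, hx⟩ ↦
    (IsUnit.of_pow_eq_one hx hn.ne').ne_zero
  have hint : ∀ {x : ℂ}, (∃ n : ℕ, 0 < n ∧ x ^ n = 1) → IsIntegral ℤ x := fun ⟨_, hn, hx⟩ ↦
    isIntegral_of_pow_eq_one hn hx
  have hint_inv : ∀ {x : ℂ}, (∃ n : ℕ, 0 < n ∧ x ^ n = 1) → IsIntegral ℤ x⁻¹ := fun ⟨_, hn, hx⟩ ↦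
    isIntegral_of_pow_eq_one hn (by rw [inv_pow, hx, inv_one])
  have hm0 : (m : ℂ) ≠ 0 := by exact_mod_cast (by omega : m ≠ 0)
  apply not_isIntegral_natCast_inv (K := ℂ) hm
  rw [inv_eq_of_one_sub_div_sub_div_sq_eq_zero hm0 (hne ha) (hne hb) (hne hc) (hne hd) h]
  exact ((isIntegral_natCast m).sub (((hint ha).add (hint hb)).mul ((hint hc).add (hint hd)))).mul
    ((((hint_inv ha).mul (hint_inv hb)).mul (hint_inv hc)).mul (hint_inv hd))
end

section
/- Let q be a prime and let d be an integer coprime to q; write d⁻¹ for the inverse of d modulo q. For integers x, y, z define T(x,y,z;q) := ∑_{α,β,γ ∈ (ℤ/qℤ)ˣ} e( (γ·(α⁻¹ − β⁻¹) + (α·x + β·y)·d⁻¹ + γ·z)/q ). Then: (i) if q | z, T(x,y,z;q) = q·c_q(x+y) − c_q(x)·c_q(y); (ii) if q ∤ z, T(x,y,z;q) = q·e((y−x)·(z·d)⁻¹/q)·S(x·(z·d)⁻¹, −y·(z·d)⁻¹; q) − q − c_q(x)·c_q(y), where (z·d)⁻¹ denotes the inverse of z·d modulo q. -/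
/-!
Summing over `γ` first turns the innermost sum into the Ramanujan sum `c_q(α⁻¹ - β⁻¹ + z)`,
which is `q · [α⁻¹ - β⁻¹ + z = 0] - 1`. The `-1` part factors as `c_q(x) c_q(y)`, leaving `q`
times the sum of `e((αx + βy) d⁻¹ / q)` over the hyperbola `β⁻¹ = α⁻¹ + z`. For `z = 0` the
hyperbola is the diagonal `β = α`, which gives `c_q(x + y)`. For `z ≠ 0` it is parametrized by
the units `t ≠ 1` through `α = (t - 1) / z`, `β = (1 - t⁻¹) / z`, turning the sum into
`e((y - x)(zd)⁻¹ / q) S(x(zd)⁻¹, -y(zd)⁻¹; q)` minus the missing term `t = 1`, which is `1`.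
-/

open Complex
open scoped Classical

noncomputable section

/-- the additive character `e(w/q)` for `w : ZMod q` -/
def eZ (q : ℕ) [NeZero q] (w : ZMod q) : ℂ :=
  Complex.exp (2 * Real.pi * Complex.I * w.val / q)

/-- the Ramanujan sum `c_q(n)` -/
def ramanujanSum (q : ℕ) [NeZero q] (n : ZMod q) : ℂ :=
  ∑ a : (ZMod q)ˣ, eZ q ((a : ZMod q) * n)

/-- the Kloosterman sum `S(m,n;q)` -/
def kloosterman (q : ℕ) [NeZero q] (m n : ZMod q) : ℂ :=
  ∑ α : (ZMod q)ˣ, eZ q (m * (α : ZMod q) + n * ((α⁻¹ : (ZMod q)ˣ) : ZMod q))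

/-- the triple exponential sum `T(x,y,z;q)` -/
def Tsum (q : ℕ) [NeZero q] (d : ZMod q) (x y z : ZMod q) : ℂ :=
  ∑ α : (ZMod q)ˣ, ∑ β : (ZMod q)ˣ, ∑ γ : (ZMod q)ˣ,
    eZ q ((γ : ZMod q) * (((α⁻¹ : (ZMod q)ˣ) : ZMod q) - ((β⁻¹ : (ZMod q)ˣ) : ZMod q)) +
      ((α : ZMod q) * x + (β : ZMod q) * y) * d⁻¹ + (γ : ZMod q) * z)

section UnitsSum

variable {G₀ M : Type*} [GroupWithZero G₀] [Fintype G₀] [DecidableEq G₀] [AddCommGroup M]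

lemma sum_units_eq_sum_sub_zero (f : G₀ → M) : ∑ α : G₀ˣ, f α = ∑ a, f a - f 0 := by
  rw [← Finset.sum_erase_eq_sub (Finset.mem_univ 0),
    Finset.sum_subtype _ (p := (· ≠ 0)) (by simp) f]
  exact Fintype.sum_equiv unitsEquivNeZero _ _ fun _ => rfl

lemma sum_units_ite_inv_eq {F : Type*} [Field F] [Fintype F] [DecidableEq F] (g : F → M) (w : F) :
    ∑ β : Fˣ, (if (β : F)⁻¹ = w then g β else 0) = if w = 0 then 0 else g w⁻¹ := by
  rw [sum_units_eq_sum_sub_zero fun b => if b⁻¹ = w then g b else 0]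
  simp only [inv_eq_iff_eq_inv, Finset.sum_ite_eq', Finset.mem_univ, if_true, inv_zero]
  split_ifs <;> simp_all

end UnitsSum

section Hyperbola

variable {F R : Type*} [Field F] [Fintype F] [DecidableEq F] [CommRing R]
  (ψ : AddChar F R) (u v Z : F)

def hyperbolaSum : R :=
  ∑ α : Fˣ, ∑ β : Fˣ, if (β : F)⁻¹ = (α : F)⁻¹ + Z then ψ (α * u + β * v) else 0

lemma hyperbolaSum_eq_sum_units : hyperbolaSum ψ u v Z =
    ∑ α : Fˣ, if (α : F)⁻¹ + Z = 0 then 0 else ψ (α * u + ((α : F)⁻¹ + Z)⁻¹ * v) :=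
  Finset.sum_congr rfl fun α _ => sum_units_ite_inv_eq (fun b => ψ (α * u + b * v)) _

lemma hyperbolaSum_zero : hyperbolaSum ψ u v 0 = ∑ α : Fˣ, ψ (α * (u + v)) := by
  simp [hyperbolaSum_eq_sum_units, mul_add]

lemma hyperbolaSum_of_ne_zero (hZ : Z ≠ 0) : hyperbolaSum ψ u v Z =
    ψ ((v - u) / Z) * ∑ t : Fˣ, ψ (u / Z * t + -v / Z * ↑t⁻¹) - 1 := by
  set f : F → R := fun a => if a⁻¹ + Z = 0 then 0 else ψ (a * u + (a⁻¹ + Z)⁻¹ * v)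
  set g : F → R := fun t => if t = 0 then 0 else ψ ((v - u) / Z + (u / Z * t + -v / Z * t⁻¹))
  have hfg : ∀ t ≠ 1, f ((t - 1) / Z) = g t := by
    intro t ht
    have ht1 : t - 1 ≠ 0 := sub_ne_zero.2 ht
    have hinv : ((t - 1) / Z)⁻¹ + Z = Z * t / (t - 1) := by field_simp; ring
    simp only [f, g, hinv]
    by_cases ht0 : t = 0
    · simp [ht0]
    · rw [if_neg (div_ne_zero (mul_ne_zero hZ ht0) ht1), if_neg ht0]
      congr 1
      field_simp
      ring
  have hg0 : g 0 = 0 := by simp [g]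
  have hg1 : g 1 = 1 := by
    have : (v - u) / Z + (u / Z * 1 + -v / Z * 1⁻¹) = 0 := by ring
    simp only [g, if_neg one_ne_zero, this, AddChar.map_zero_eq_one]
  have hg : ∑ t, g t = ψ ((v - u) / Z) * ∑ t : Fˣ, ψ (u / Z * t + -v / Z * ↑t⁻¹) := by
    rw [Finset.mul_sum, ← sub_zero (∑ t, g t), ← hg0, ← sum_units_eq_sum_sub_zero]
    refine Finset.sum_congr rfl fun t _ => ?_
    simp [g, t.ne_zero, AddChar.map_add_eq_mul]
  calc hyperbolaSum ψ u v Z = ∑ a, f a - f 0 := by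
        rw [hyperbolaSum_eq_sum_units, sum_units_eq_sum_sub_zero f]
    _ = ∑ t, f ((t - 1) / Z) - f 0 := by
        rw [← ((Equiv.subRight 1).trans (Equiv.divRight₀ Z hZ)).sum_comp]; rfl
    -- `t = 1` corresponds to `α = 0`, the one non-unit
    _ = ∑ t ∈ Finset.univ.erase 1, g t := by
        rw [← Finset.add_sum_erase _ _ (Finset.mem_univ 1),
          Finset.sum_congr rfl fun t ht => hfg t (Finset.ne_of_mem_erase ht)]
        simp
    _ = _ := by rw [Finset.sum_erase_eq_sub (Finset.mem_univ 1), hg, hg1]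

end Hyperbola

section ZModSums

variable {q : ℕ} [NeZero q]

lemma eZ_eq_stdAddChar (w : ZMod q) : eZ q w = ZMod.stdAddChar w := by
  rw [ZMod.stdAddChar_apply, ZMod.toCircle_apply]
  rfl

variable [Fact q.Prime]

lemma ramanujanSum_eq_ite (n : ZMod q) :
    ramanujanSum q n = (if n = 0 then (q : ℂ) else 0) - 1 := by
  simp only [ramanujanSum, eZ_eq_stdAddChar]
  rw [sum_units_eq_sum_sub_zero fun a => ZMod.stdAddChar (a * n),
    AddChar.sum_mulShift n (ZMod.isPrimitive_stdAddChar q)]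
  simp [ZMod.card]

lemma ramanujanSum_mul_of_ne_zero {D : ZMod q} (hD : D ≠ 0) (n : ZMod q) :
    ramanujanSum q (n * D) = ramanujanSum q n := by
  simp [ramanujanSum_eq_ite, hD]

lemma Tsum_eq_hyperbolaSum {D : ZMod q} (hD : D ≠ 0) (X Y Z : ZMod q) :
    Tsum q D X Y Z = q * hyperbolaSum ZMod.stdAddChar (X * D⁻¹) (Y * D⁻¹) Z -
      ramanujanSum q X * ramanujanSum q Y := by
  set ψ : AddChar (ZMod q) ℂ := ZMod.stdAddChar
  have hγ (α β : (ZMod q)ˣ) :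
      ∑ γ : (ZMod q)ˣ, eZ q (γ * (↑α⁻¹ - ↑β⁻¹) + (α * X + β * Y) * D⁻¹ + γ * Z) =
        ramanujanSum q ((α : ZMod q)⁻¹ - (β : ZMod q)⁻¹ + Z) *
          ψ (α * (X * D⁻¹) + β * (Y * D⁻¹)) := by
    rw [ramanujanSum, Finset.sum_mul]
    refine Finset.sum_congr rfl fun γ _ => ?_
    rw [eZ_eq_stdAddChar, eZ_eq_stdAddChar, ← AddChar.map_add_eq_mul,
      Units.val_inv_eq_inv_val, Units.val_inv_eq_inv_val]
    congr 1
    ring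
  calc Tsum q D X Y Z = ∑ α : (ZMod q)ˣ, ∑ β : (ZMod q)ˣ,
        ((q : ℂ) * (if (β : ZMod q)⁻¹ = (α : ZMod q)⁻¹ + Z then
          ψ (α * (X * D⁻¹) + β * (Y * D⁻¹)) else 0) -
          ψ (α * (X * D⁻¹)) * ψ (β * (Y * D⁻¹))) := by
        refine Finset.sum_congr rfl fun α _ => Finset.sum_congr rfl fun β _ => ?_
        rw [hγ, ramanujanSum_eq_ite, ← AddChar.map_add_eq_mul]
        have : (α : ZMod q)⁻¹ - (β : ZMod q)⁻¹ + Z = 0 ↔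
            (β : ZMod q)⁻¹ = (α : ZMod q)⁻¹ + Z := by
          constructor <;> intro h <;> linear_combination -h
        simp only [this]
        split_ifs <;> ring
    _ = q * hyperbolaSum ψ (X * D⁻¹) (Y * D⁻¹) Z -
        (∑ α : (ZMod q)ˣ, ψ (α * (X * D⁻¹))) * ∑ β : (ZMod q)ˣ, ψ (β * (Y * D⁻¹)) := by
        simp only [Finset.sum_sub_distrib, ← Finset.mul_sum, Finset.sum_mul_sum, hyperbolaSum]
    _ = _ := by
        rw [← ramanujanSum_mul_of_ne_zero (inv_ne_zero hD) X,
          ← ramanujanSum_mul_of_ne_zero (inv_ne_zero hD) Y]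
        simp only [ramanujanSum, eZ_eq_stdAddChar, ψ]

lemma hyperbolaSum_stdAddChar_of_ne_zero {Z : ZMod q} (hZ : Z ≠ 0) (u v : ZMod q) :
    hyperbolaSum ZMod.stdAddChar u v Z =
      eZ q ((v - u) / Z) * kloosterman q (u / Z) (-v / Z) - 1 := by
  simp only [hyperbolaSum_of_ne_zero _ _ _ _ hZ, kloosterman, eZ_eq_stdAddChar]

end ZModSums

/-- **Evaluation of the triple exponential sum `T(x,y,z;q)`.** -/
theorem Tsum_eval (q : ℕ) [NeZero q] (hq : q.Prime) (d : ℤ) (hd : IsCoprime d (q : ℤ))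
    (x y z : ℤ) :
    ((q : ℤ) ∣ z →
      Tsum q (d : ZMod q) (x : ZMod q) (y : ZMod q) (z : ZMod q) =
        (q : ℂ) * ramanujanSum q ((x + y : ℤ) : ZMod q) -
          ramanujanSum q (x : ZMod q) * ramanujanSum q (y : ZMod q)) ∧
    (¬ (q : ℤ) ∣ z →
      Tsum q (d : ZMod q) (x : ZMod q) (y : ZMod q) (z : ZMod q) =
        (q : ℂ) * eZ q (((y - x : ℤ) : ZMod q) * (((z : ZMod q) * (d : ZMod q))⁻¹)) *
            kloosterman q ((x : ZMod q) * (((z : ZMod q) * (d : ZMod q))⁻¹))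
              (-(y : ZMod q) * (((z : ZMod q) * (d : ZMod q))⁻¹)) -
          (q : ℂ) - ramanujanSum q (x : ZMod q) * ramanujanSum q (y : ZMod q)) := by
  have : Fact q.Prime := ⟨hq⟩
  have hD : (d : ZMod q) ≠ 0 := (ZMod.unitOfIsCoprime d hd).ne_zero
  rw [Tsum_eq_hyperbolaSum hD]
  refine ⟨fun hz => ?_, fun hz => ?_⟩
  · rw [(ZMod.intCast_zmod_eq_zero_iff_dvd z q).2 hz, hyperbolaSum_zero, Int.cast_add,
      ← ramanujanSum_mul_of_ne_zero (inv_ne_zero hD) (_ + _)]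
    simp only [ramanujanSum, eZ_eq_stdAddChar, add_mul]
  · have hZ : (z : ZMod q) ≠ 0 := mt (ZMod.intCast_zmod_eq_zero_iff_dvd z q).1 hz
    rw [hyperbolaSum_stdAddChar_of_ne_zero hZ]
    push_cast
    ring_nf

end
end
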